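/- arXiv:2206.05564 — 7 statements merged into one kernel-verified Lean document; each statement's English description precedes it below -/
import Mathlib

section
/- Let d ∈ ℕ, ε₀ ∈ ℝ^d, and let α : ℝ → ℝ be differentiable on an interval I with 0 < α(t) < 1 for all t ∈ I. Suppose u : ℝ → ℝ^d is differentiable on I and satisfies u'(τ) = (α'(τ)/(2α(τ)))·u(τ) − (α'(τ)/(2α(τ)))·ε₀/√(1 − α(τ)) for all τ ∈ I (the probability flow ODE with the constant score approximation ε_θ(u,τ) ≡ ε₀). Then for all s, t ∈ I, u(s) = √(α(s)/α(t))·u(t) + (√(1 − α(s)) − √(1 − α(t))·√(α(s)/α(t)))·ε₀; in particular one step of the deterministic DDIM update reproduces the exact solution of this ODE. -/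
/-- One step of the deterministic DDIM update reproduces the exact
solution of the probability flow ODE with the constant score approximation. -/
theorem ddim_ode_one_step (d : ℕ) (ε₀ : Fin d → ℝ) (I : Set ℝ) (hI : Convex ℝ I)
    (α α' : ℝ → ℝ)
    (hα : ∀ t ∈ I, HasDerivAt α (α' t) t)
    (hα01 : ∀ t ∈ I, 0 < α t ∧ α t < 1)
    (u : ℝ → Fin d → ℝ)
    (hu : ∀ τ ∈ I, HasDerivAt u
      ((α' τ / (2 * α τ)) • u τ - (α' τ / (2 * α τ) / Real.sqrt (1 - α τ)) • ε₀) τ) :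
    ∀ s ∈ I, ∀ t ∈ I,
      u s = Real.sqrt (α s / α t) • u t +
        (Real.sqrt (1 - α s) - Real.sqrt (1 - α t) * Real.sqrt (α s / α t)) • ε₀ := by
  intro s hs t ht
  set g : ℝ → Fin d → ℝ := fun τ =>
    (Real.sqrt (α τ))⁻¹ • u τ - (Real.sqrt (1 - α τ) * (Real.sqrt (α τ))⁻¹) • ε₀ with hg
  have key : ∀ τ ∈ I, HasDerivAt g 0 τ := by
    intro τ hτ
    obtain ⟨h0, h1⟩ := hα01 τ hτ
    have hb0 : (0:ℝ) < 1 - α τ := by linarith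
    have hsa : Real.sqrt (α τ) ≠ 0 := ne_of_gt (Real.sqrt_pos.mpr h0)
    have hsb : Real.sqrt (1 - α τ) ≠ 0 := ne_of_gt (Real.sqrt_pos.mpr hb0)
    have hd1 : HasDerivAt (fun τ => (Real.sqrt (α τ))⁻¹)
        (-(α' τ / (2 * Real.sqrt (α τ))) / (Real.sqrt (α τ))^2) τ :=
      ((hα τ hτ).sqrt (ne_of_gt h0)).inv hsa
    have h1a : HasDerivAt (fun τ => 1 - α τ) (-α' τ) τ := by
      simpa using ((hα τ hτ)).const_sub 1
    have hd2 : HasDerivAt (fun τ => Real.sqrt (1 - α τ) * (Real.sqrt (α τ))⁻¹)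
        ((-α' τ) / (2 * Real.sqrt (1 - α τ)) * (Real.sqrt (α τ))⁻¹ +
          Real.sqrt (1 - α τ) * (-(α' τ / (2 * Real.sqrt (α τ))) / (Real.sqrt (α τ))^2)) τ :=
      (h1a.sqrt (ne_of_gt hb0)).mul hd1
    have hD := (hd1.smul (hu τ hτ)).sub (hd2.smul_const ε₀)
    refine hD.congr_deriv (Eq.symm ?_)
    funext i
    have hsa2 : Real.sqrt (α τ) ^ 2 = α τ := Real.sq_sqrt h0.le
    have hsb2 : Real.sqrt (1 - α τ) ^ 2 = 1 - α τ := Real.sq_sqrt hb0.le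
    simp only [Pi.zero_apply, Pi.sub_apply, Pi.add_apply, Pi.smul_apply, smul_eq_mul]
    set sa := Real.sqrt (α τ)
    set sb := Real.sqrt (1 - α τ)
    have hα0 : α τ ≠ 0 := ne_of_gt h0
    have hs2 : sb ^ 2 = 1 - sa ^ 2 := by rw [hsa2, hsb2]
    rw [← hsa2]
    field_simp
    ring_nf
    linear_combination (-(α' τ * ε₀ i)) * hs2
  have hgc : g s = g t := by
    have h := hI.norm_image_sub_le_of_norm_hasDerivWithin_le (C := 0)
      (fun x hx => (key x hx).hasDerivWithinAt)
      (fun x hx => by simp) ht hs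
    have h2 : ‖g s - g t‖ ≤ 0 := by simpa using h
    exact sub_eq_zero.mp (norm_le_zero_iff.mp h2)
  obtain ⟨h0s, h1s⟩ := hα01 s hs
  obtain ⟨h0t, h1t⟩ := hα01 t ht
  have hsas : Real.sqrt (α s) ≠ 0 := ne_of_gt (Real.sqrt_pos.mpr h0s)
  have hsat : Real.sqrt (α t) ≠ 0 := ne_of_gt (Real.sqrt_pos.mpr h0t)
  have hdiv : Real.sqrt (α s / α t) = Real.sqrt (α s) / Real.sqrt (α t) :=
    Real.sqrt_div h0s.le _
  funext i
  have hco := congrFun hgc i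
  simp only [hg, Pi.sub_apply, Pi.smul_apply, smul_eq_mul] at hco
  simp only [Pi.add_apply, Pi.smul_apply, smul_eq_mul, hdiv]
  field_simp at hco ⊢
  linarith [hco]
end

section
/- Let λ ∈ ℝ and let a_s, a_t ∈ (0,1) with a_s > 0 and a_t > 0. Define σ² := (1 − a_t)·(1 − ((1 − a_t)/(1 − a_s))^(λ²)·(a_s/a_t)^(λ²)). Then 1 − a_t − σ² > 0 and ((1 − a_t)/(1 − a_s))^((1+λ²)/2)·(a_s/a_t)^(λ²/2)·√(1 − a_s) = √(1 − a_t − σ²). Consequently the mean of the one-step stochastic gDDIM update for DDPM, Ψ(t,s)·u_s + (Ψ̂(t,s) − Ψ(t,s))·√(1−a_s)·ε with Ψ(t,s) = √(a_t/a_s) and Ψ̂(t,s) = ((1−a_t)/(1−a_s))^((1+λ²)/2)·(a_s/a_t)^(λ²/2), equals the DDIM mean √(a_t/a_s)·u_s + (√(1 − a_t − σ²) − √(a_t/a_s)·√(1 − a_s))·ε for all u_s, ε ∈ ℝ^d. -/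
/-- The mean of the one-step stochastic gDDIM update for DDPM equals
the DDIM mean with variance σ². -/
theorem gddim_mean_eq_ddim_mean (d : ℕ) (lam a_s a_t : ℝ)
    (has0 : 0 < a_s) (has1 : a_s < 1) (hat0 : 0 < a_t) (hat1 : a_t < 1) :
    let σ2 := (1 - a_t) * (1 - ((1 - a_t) / (1 - a_s)) ^ (lam^2) * (a_s / a_t) ^ (lam^2))
    0 < 1 - a_t - σ2 ∧
    ((1 - a_t) / (1 - a_s)) ^ ((1 + lam^2)/2) * (a_s / a_t) ^ (lam^2/2) *
        Real.sqrt (1 - a_s) = Real.sqrt (1 - a_t - σ2) ∧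
    ∀ u_s ε : Fin d → ℝ,
      Real.sqrt (a_t / a_s) • u_s +
        ((((1 - a_t) / (1 - a_s)) ^ ((1 + lam^2)/2) * (a_s / a_t) ^ (lam^2/2) -
          Real.sqrt (a_t / a_s)) * Real.sqrt (1 - a_s)) • ε =
      Real.sqrt (a_t / a_s) • u_s +
        (Real.sqrt (1 - a_t - σ2) - Real.sqrt (a_t / a_s) * Real.sqrt (1 - a_s)) • ε := by
  intro σ2
  have hs : (0:ℝ) < 1 - a_s := by linarith
  have ht : (0:ℝ) < 1 - a_t := by linarith
  have hA : (0:ℝ) < (1 - a_t) / (1 - a_s) := by positivity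
  have hB : (0:ℝ) < a_s / a_t := by positivity
  have hkey : 1 - a_t - σ2 =
      ((1 - a_t) / (1 - a_s)) ^ (1 + lam^2) * (a_s / a_t) ^ (lam^2) * (1 - a_s) := by
    rw [Real.rpow_add hA, Real.rpow_one]
    have h2 : ((1 - a_t) / (1 - a_s)) * (1 - a_s) = 1 - a_t := by field_simp
    have h3 : 1 - a_t - σ2
        = (1 - a_t) * (((1 - a_t) / (1 - a_s)) ^ (lam^2) * (a_s / a_t) ^ (lam^2)) := by
      simp only [σ2]; ring
    rw [h3]
    field_simp
  have hpos : 0 < 1 - a_t - σ2 := by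
    rw [hkey]; positivity
  have heq : Real.sqrt (1 - a_t - σ2)
      = ((1 - a_t) / (1 - a_s)) ^ ((1 + lam^2)/2) * (a_s / a_t) ^ (lam^2/2) *
        Real.sqrt (1 - a_s) := by
    rw [hkey, Real.sqrt_mul (by positivity), Real.sqrt_mul (by positivity),
      Real.sqrt_eq_rpow (((1 - a_t) / (1 - a_s)) ^ (1 + lam^2)),
      Real.sqrt_eq_rpow ((a_s / a_t) ^ (lam^2)),
      ← Real.rpow_mul hA.le, ← Real.rpow_mul hB.le]
    ring_nf
  refine ⟨hpos, heq.symm, fun u_s ε => ?_⟩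
  rw [heq]
  congr 1
  congr 1
  ring
end

section
/- Let D ∈ ℕ and let F, G : ℝ → ℝ^{D×D} be continuous on an interval I containing 0. Let Σ : ℝ → ℝ^{D×D} be such that Σ_t is invertible for t ∈ I, let Ψ : ℝ → ℝ^{D×D} be differentiable with Ψ'(t) = F_t·Ψ(t) and Ψ(0) = I, and let R : ℝ → ℝ^{D×D} be differentiable with R'(t) = (F_t + (1/2) G_t G_tᵀ Σ_t⁻¹)·R_t for all t ∈ I. Then for any u₀, ε ∈ ℝ^D, the curve u(t) := Ψ(t)·u₀ + R_t·ε satisfies u'(t) = F_t·u(t) − (1/2) G_t G_tᵀ·(−Σ_t⁻¹·(u(t) − Ψ(t)·u₀)) for all t ∈ I; that is, u solves the probability flow ODE du/dt = F_t u − (1/2) G_t G_tᵀ ∇log p_t(u) whose score is the Gaussian score ∇log p_t(u) = −Σ_t⁻¹(u − Ψ(t)·u₀). -/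
open Matrix

attribute [local instance] Matrix.normedAddCommGroup Matrix.normedSpace

/-- Applying a matrix-valued differentiable curve to a fixed vector. -/
lemma hasDerivAt_mulVec {D : ℕ} {M : ℝ → Matrix (Fin D) (Fin D) ℝ}
    {M' : Matrix (Fin D) (Fin D) ℝ} {t : ℝ} (h : HasDerivAt M M' t)
    (v : Fin D → ℝ) :
    HasDerivAt (fun τ => M τ *ᵥ v) (M' *ᵥ v) t := by
  let L : Matrix (Fin D) (Fin D) ℝ →ₗ[ℝ] (Fin D → ℝ) :=
    { toFun := fun A => A *ᵥ v
      map_add' := fun A B => Matrix.add_mulVec A B v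
      map_smul' := fun c A => by simp [Matrix.smul_mulVec] }
  exact (L.toContinuousLinearMap.hasFDerivAt.comp_hasDerivAt t h : )

/-- The curve `u(t) = Ψ(t)·u₀ + R_t·ε` solves the probability flow ODE
with the Gaussian score `∇log p_t(u) = −Σ_t⁻¹(u − Ψ(t)·u₀)`. -/
theorem gddim_curve_solves_prob_flow (D : ℕ) (I : Set ℝ) (hI : Convex ℝ I)
    (h0 : (0 : ℝ) ∈ I)
    (F G S Ψ R : ℝ → Matrix (Fin D) (Fin D) ℝ)
    (hF : ContinuousOn F I) (hG : ContinuousOn G I)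
    (hS : ∀ t ∈ I, IsUnit (S t))
    (hΨ : ∀ t ∈ I, HasDerivAt Ψ (F t * Ψ t) t) (hΨ0 : Ψ 0 = 1)
    (hR : ∀ t ∈ I, HasDerivAt R
      ((F t + (1/2 : ℝ) • (G t * (G t)ᵀ * (S t)⁻¹)) * R t) t)
    (u₀ ε : Fin D → ℝ) :
    ∀ t ∈ I,HasDerivAt (fun τ => Ψ τ *ᵥ u₀ + R τ *ᵥ ε)
      (F t *ᵥ (Ψ t *ᵥ u₀ + R t *ᵥ ε) -
        ((1/2 : ℝ) • (G t * (G t)ᵀ)) *ᵥ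
          (-((S t)⁻¹ *ᵥ ((Ψ t *ᵥ u₀ + R t *ᵥ ε) - Ψ t *ᵥ u₀)))) t := by
  intro t ht
  have h1 := hasDerivAt_mulVec (hΨ t ht) u₀
  have h2 := hasDerivAt_mulVec (hR t ht) ε
  have := h1.add h2
  convert this using 1
  iterate 4 rfl
  have hsimp : (Ψ t *ᵥ u₀ + R t *ᵥ ε) - Ψ t *ᵥ u₀ = R t *ᵥ ε := by
    abel
  rw [hsimp]
  simp only [Matrix.add_mul, Matrix.add_mulVec, Matrix.mulVec_neg, sub_neg_eq_add,
    Matrix.mulVec_add,  Matrix.smul_mulVec,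
    Matrix.smul_mul, Matrix.mul_assoc]
  simp only [← Matrix.mulVec_mulVec]
  abel
end

section
/- Let D ∈ ℕ and let F, G : ℝ → ℝ^{D×D} be continuous on an interval I containing 0. Let Σ : ℝ → ℝ^{D×D} be continuously differentiable on I with Σ_t symmetric and invertible for all t ∈ I and satisfying the Lyapunov ODE Σ'(t) = F_t Σ_t + Σ_t F_tᵀ + G_t G_tᵀ. Let R : ℝ → ℝ^{D×D} be differentiable on I with R'(t) = (F_t + (1/2) G_t G_tᵀ Σ_t⁻¹)·R_t and R₀ R₀ᵀ = Σ₀. Then R_t R_tᵀ = Σ_t for all t ∈ I. -/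
open Matrix Set

attribute [local instance] Matrix.normedAddCommGroup Matrix.normedSpace

variable {D : ℕ}

noncomputable def mulCLM (D : ℕ) : Matrix (Fin D) (Fin D) ℝ →ₗ[ℝ]
    (Matrix (Fin D) (Fin D) ℝ →L[ℝ] Matrix (Fin D) (Fin D) ℝ) :=
  (LinearMap.toContinuousLinearMap :
      (Matrix (Fin D) (Fin D) ℝ →ₗ[ℝ] Matrix (Fin D) (Fin D) ℝ) ≃ₗ[ℝ] _).toLinearMap.comp
    (LinearMap.mul ℝ (Matrix (Fin D) (Fin D) ℝ))

@[simp] lemma mulCLM_apply (A B : Matrix (Fin D) (Fin D) ℝ) : mulCLM D A B = A * B := rfl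

lemma HasDerivAt.matMul {f g f' g' : ℝ → Matrix (Fin D) (Fin D) ℝ} {t : ℝ}
    (hf : HasDerivAt f (f' t) t) (hg : HasDerivAt g (g' t) t) :
    HasDerivAt (fun s => f s * g s) (f' t * g t + f t * g' t) t := by
  have hc : HasDerivAt (fun s => mulCLM D (f s)) (mulCLM D (f' t)) t :=
    @HasFDerivAt.comp_hasDerivAt ℝ _ (Matrix (Fin D) (Fin D) ℝ) _ _
      (Matrix (Fin D) (Fin D) ℝ →L[ℝ] Matrix (Fin D) (Fin D) ℝ) ContinuousLinearMap.toNormedAddCommGroup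
      ContinuousLinearMap.toNormedSpace f (f' t) t _ _ (mulCLM D).toContinuousLinearMap.hasFDerivAt hf
  have h2 := hc.clm_apply hg
  exact h2

lemma HasDerivAt.matTranspose {f f' : ℝ → Matrix (Fin D) (Fin D) ℝ} {t : ℝ}
    (hf : HasDerivAt f (f' t) t) :
    HasDerivAt (fun s => (f s)ᵀ) ((f' t)ᵀ) t := by
  have := (LinearMap.toContinuousLinearMap
      ((Matrix.transposeLinearEquiv (Fin D) (Fin D) ℝ ℝ).toLinearMap)).hasFDerivAt.comp_hasDerivAt
      t hf
  exact this

/-- the bilinear-ish map `B ↦ (X ↦ B * X + X * Bᵀ)` as a linear map into CLMs. -/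
noncomputable def lyapCLM (D : ℕ) : Matrix (Fin D) (Fin D) ℝ →ₗ[ℝ]
    (Matrix (Fin D) (Fin D) ℝ →L[ℝ] Matrix (Fin D) (Fin D) ℝ) where
  toFun B := LinearMap.toContinuousLinearMap <| LinearMap.mk₂ ℝ
      (fun B X => B * X + X * Bᵀ)
      (fun B₁ B₂ X => by simp [add_mul, mul_add, transpose_add]; abel)
      (fun c B X => by simp [smul_mul_assoc, mul_smul_comm, transpose_smul, smul_add])
      (fun B X₁ X₂ => by simp [mul_add, add_mul]; abel)
      (fun c B X => by simp [smul_mul_assoc, mul_smul_comm, smul_add]) B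
  map_add' B₁ B₂ := by
    ext X
    simp [add_mul, mul_add, transpose_add]
  map_smul' c B := by
    ext X
    simp [smul_mul_assoc, mul_smul_comm, transpose_smul, smul_add]

@[simp] lemma lyapCLM_apply (A B : Matrix (Fin D) (Fin D) ℝ) :
    lyapCLM D A B = A * B + B * Aᵀ := rfl

/-- If `Σ_t` solves the Lyapunov ODE and `R_t` solves the gDDIM ODE with
`R₀R₀ᵀ = Σ₀`, then `R_t R_tᵀ = Σ_t` on the interval. -/
theorem gddim_R_factorizes_Sigma (D : ℕ) (I : Set ℝ) (hI : Convex ℝ I)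
    (h0 : (0 : ℝ) ∈ I)
    (F G S R : ℝ → Matrix (Fin D) (Fin D) ℝ)
    (hF : ContinuousOn F I) (hG : ContinuousOn G I)
    (hSsymm : ∀ t ∈ I, (S t)ᵀ = S t) (hSunit : ∀ t ∈ I, IsUnit (S t))
    (hS : ∀ t ∈ I, HasDerivAt S (F t * S t + S t * (F t)ᵀ + G t * (G t)ᵀ) t)
    (hR : ∀ t ∈ I, HasDerivAt R
      ((F t + (1/2 : ℝ) • (G t * (G t)ᵀ * (S t)⁻¹)) * R t) t)
    (hR0 : R 0 * (R 0)ᵀ = S 0) :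
    ∀ t ∈ I, R t * (R t)ᵀ = S t := by
  letI : NormedAddCommGroup (Matrix (Fin D) (Fin D) ℝ →L[ℝ] Matrix (Fin D) (Fin D) ℝ) :=
    ContinuousLinearMap.toNormedAddCommGroup
  -- the common drift matrix
  set A : ℝ → Matrix (Fin D) (Fin D) ℝ :=
    fun t => F t + (1/2 : ℝ) • (G t * (G t)ᵀ * (S t)⁻¹) with hA_def
  set X : ℝ → Matrix (Fin D) (Fin D) ℝ := fun t => R t * (R t)ᵀ with hX_def
  have hdet : ∀ t ∈ I, IsUnit (S t).det := fun t ht =>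
    (Matrix.isUnit_iff_isUnit_det _).1 (hSunit t ht)
  -- continuity facts
  have hScont : ContinuousOn S I := fun t ht => (hS t ht).continuousAt.continuousWithinAt
  have hSinv : ContinuousOn (fun t => (S t)⁻¹) I := by
    intro t ht
    have h1 : ContinuousAt Ring.inverse (S t).det :=
      (hdet t ht).unit_spec ▸ NormedRing.inverse_continuousAt (hdet t ht).unit
    exact ((continuousAt_matrix_inv (S t) h1).comp_continuousWithinAt
      (hScont t ht))
  have hGT : ContinuousOn (fun t => (G t)ᵀ) I :=
    (Continuous.matrix_transpose continuous_id).comp_continuousOn hG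
  have hAcont : ContinuousOn A I :=
    hF.add (ContinuousOn.const_smul (g := fun t => (G t * (G t)ᵀ * (S t)⁻¹)) ((hG.mul hGT).mul hSinv) (1/2 : ℝ))
  -- X satisfies the ODE X' = A X + X Aᵀ
  have hX : ∀ t ∈ I, HasDerivAt X (A t * X t + X t * (A t)ᵀ) t := by
    intro t ht
    have h1 : HasDerivAt X (A t * R t * (R t)ᵀ + R t * (A t * R t)ᵀ) t :=
      HasDerivAt.matMul (f' := fun t => A t * R t) (g' := fun t => (A t * R t)ᵀ)
        (hR t ht) ((hR t ht).matTranspose (f' := fun t => A t * R t))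
    convert h1 using 1
    simp [hX_def, Matrix.transpose_mul, Matrix.mul_assoc]
  -- S satisfies the same ODE
  have hS' : ∀ t ∈ I, HasDerivAt S (A t * S t + S t * (A t)ᵀ) t := by
    intro t ht
    convert hS t ht using 1
    have hinv : (S t)⁻¹ * S t = 1 := Matrix.nonsing_inv_mul _ (hdet t ht)
    have hinv' : S t * (S t)⁻¹ = 1 := Matrix.mul_nonsing_inv _ (hdet t ht)
    have hsymm : ((S t)⁻¹)ᵀ = (S t)⁻¹ := by
      rw [Matrix.transpose_nonsing_inv, hSsymm t ht]
    simp only [hA_def, add_mul, mul_add, Matrix.transpose_add, Matrix.transpose_smul,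
      Matrix.smul_mul, Matrix.mul_smul, Matrix.transpose_mul, Matrix.transpose_transpose, hsymm]
    rw [Matrix.mul_assoc (G t * (G t)ᵀ) _ _, hinv, Matrix.mul_one]
    rw [← Matrix.mul_assoc (S t) ((S t)⁻¹) _, hinv', Matrix.one_mul]
    rw [add_add_add_comm, ← add_smul]
    norm_num
  -- uniqueness of solutions: reduce to compact subintervals
  intro t₁ ht₁
  rcases le_total 0 t₁ with h01 | h01
  · -- forward direction on Icc 0 t₁
    have hsub : Icc (0:ℝ) t₁ ⊆ I := hI.ordConnected.out h0 ht₁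
    -- uniform bound for the Lipschitz constant on the compact interval
    have hΦcont : ContinuousOn (fun t => lyapCLM D (A t)) I :=
      ((lyapCLM D).continuous_of_finiteDimensional).comp_continuousOn hAcont
    obtain ⟨M, hM⟩ := (isCompact_Icc).exists_bound_of_continuousOn
      (hΦcont.mono hsub)
    set v : ℝ → Matrix (Fin D) (Fin D) ℝ → Matrix (Fin D) (Fin D) ℝ :=
      fun t Y => lyapCLM D (A t) Y with hv_def
    set s : ℝ → Set (Matrix (Fin D) (Fin D) ℝ) :=
      fun t => if t ∈ Icc (0:ℝ) t₁ then univ else ∅ with hs_def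
    have hv : ∀ t, LipschitzOnWith M.toNNReal (v t) (s t) := by
      intro t
      by_cases ht : t ∈ Icc (0:ℝ) t₁
      · have : LipschitzWith ‖lyapCLM D (A t)‖₊ (v t) := (lyapCLM D (A t)).lipschitz
        have h2 : ‖lyapCLM D (A t)‖₊ ≤ M.toNNReal := by
          rw [← NNReal.coe_le_coe]
          exact_mod_cast le_trans (hM t ht) (Real.le_coe_toNNReal M)
        exact ((this.weaken h2)).lipschitzOnWith
      · simp only [hs_def, if_neg ht]
        exact lipschitzOnWith_empty _ _
    have key : EqOn X S (Icc 0 t₁) := by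
      apply ODE_solution_unique_of_mem_Icc_right (fun t _ => hv t)
      · exact fun t ht => ((hX t (hsub ht)).continuousAt).continuousWithinAt
      · exact fun t ht => ((hX t (hsub (Ico_subset_Icc_self ht))).hasDerivWithinAt)
      · intro t ht
        have h' := Ico_subset_Icc_self ht
        simp only [hs_def]
        rw [if_pos h']
        exact mem_univ _
      · exact fun t ht => ((hS' t (hsub ht)).continuousAt).continuousWithinAt
      · exact fun t ht => ((hS' t (hsub (Ico_subset_Icc_self ht))).hasDerivWithinAt)
      · intro t ht
        have h' := Ico_subset_Icc_self ht
        simp only [hs_def]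
        rw [if_pos h']
        exact mem_univ _
      · exact hR0
    exact key (right_mem_Icc.mpr h01)
  · -- backward direction on Icc t₁ 0
    have hsub : Icc t₁ (0:ℝ) ⊆ I := hI.ordConnected.out ht₁ h0
    have hΦcont : ContinuousOn (fun t => lyapCLM D (A t)) I :=
      ((lyapCLM D).continuous_of_finiteDimensional).comp_continuousOn hAcont
    obtain ⟨M, hM⟩ := (isCompact_Icc).exists_bound_of_continuousOn
      (hΦcont.mono hsub)
    set v : ℝ → Matrix (Fin D) (Fin D) ℝ → Matrix (Fin D) (Fin D) ℝ :=
      fun t Y => lyapCLM D (A t) Y with hv_def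
    set s : ℝ → Set (Matrix (Fin D) (Fin D) ℝ) :=
      fun t => if t ∈ Icc t₁ (0:ℝ) then univ else ∅ with hs_def
    have hv : ∀ t, LipschitzOnWith M.toNNReal (v t) (s t) := by
      intro t
      by_cases ht : t ∈ Icc t₁ (0:ℝ)
      · have : LipschitzWith ‖lyapCLM D (A t)‖₊ (v t) := (lyapCLM D (A t)).lipschitz
        have h2 : ‖lyapCLM D (A t)‖₊ ≤ M.toNNReal := by
          rw [← NNReal.coe_le_coe]
          exact_mod_cast le_trans (hM t ht) (Real.le_coe_toNNReal M)
        exact ((this.weaken h2)).lipschitzOnWith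
      · simp only [hs_def, if_neg ht]
        exact lipschitzOnWith_empty _ _
    have key : EqOn X S (Icc t₁ 0) := by
      apply ODE_solution_unique_of_mem_Icc_left (fun t _ => hv t)
      · exact fun t ht => ((hX t (hsub ht)).continuousAt).continuousWithinAt
      · exact fun t ht => ((hX t (hsub (Ioc_subset_Icc_self ht))).hasDerivWithinAt)
      · intro t ht
        have h' := Ioc_subset_Icc_self ht
        simp only [hs_def]
        rw [if_pos h']
        exact mem_univ _
      · exact fun t ht => ((hS' t (hsub ht)).continuousAt).continuousWithinAt
      · exact fun t ht => ((hS' t (hsub (Ioc_subset_Icc_self ht))).hasDerivWithinAt)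
      · intro t ht
        have h' := Ioc_subset_Icc_self ht
        simp only [hs_def]
        rw [if_pos h']
        exact mem_univ _
      · exact hR0
    exact key (left_mem_Icc.mpr h01)
end

section
/- Let D ∈ ℕ, u₀ ∈ ℝ^D, and let F, G : ℝ → ℝ^{D×D} be continuous on an interval I containing 0. Let Σ : ℝ → ℝ^{D×D} have Σ_t invertible for t ∈ I, let Ψ : ℝ → ℝ^{D×D} be differentiable with Ψ'(t) = F_t·Ψ(t) and Ψ(0) = I, and let R : ℝ → ℝ^{D×D} be differentiable with R'(t) = (F_t + (1/2) G_t G_tᵀ Σ_t⁻¹)·R_t and R_t invertible for all t ∈ I. Suppose u : ℝ → ℝ^D is differentiable on I and solves the probability flow ODE with the exact Gaussian score, u'(t) = F_t·u(t) + (1/2) G_t G_tᵀ Σ_t⁻¹·(u(t) − Ψ(t)·u₀). Then the function t ↦ R_t⁻¹·(u(t) − Ψ(t)·u₀) is constant on I; equivalently, ε_GT(u(t),t) := −R_tᵀ ∇log p_t(u(t)) is constant along the solution, where ∇log p_t(u) = −Σ_t⁻¹(u − Ψ(t)·u₀) and R_t R_tᵀ = Σ_t. -/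
open Matrix

/-- Entry evaluation as a linear map on matrices. -/
private def gddim_entryLM {D : ℕ} (i j : Fin D) : Matrix (Fin D) (Fin D) ℝ →ₗ[ℝ] ℝ where
  toFun M := M i j
  map_add' _ _ := rfl
  map_smul' _ _ := rfl

section linfty

attribute [local instance] Matrix.linftyOpNormedAddCommGroup Matrix.linftyOpNormedSpace
  Matrix.linftyOpNormedRing Matrix.linftyOpNormedAlgebra

private theorem gddim_entrywise_linfty {D : ℕ}
    {f : ℝ → Matrix (Fin D) (Fin D) ℝ} {f' : Matrix (Fin D) (Fin D) ℝ} {t : ℝ} :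
    HasDerivAt f f' t ↔ ∀ i j, HasDerivAt (fun s => f s i j) (f' i j) t := by
  constructor
  · intro h i j
    exact ((gddim_entryLM i j).toContinuousLinearMap.hasFDerivAt).comp_hasDerivAt t h
  · intro h
    have key : HasDerivAt (fun s => ∑ i, ∑ j, Matrix.single i j (f s i j))
        (∑ i, ∑ j, Matrix.single i j (f' i j)) t := by
      refine HasDerivAt.fun_sum fun i _ => HasDerivAt.fun_sum fun j _ => ?_
      have := (h i j).smul_const (Matrix.single i j (1 : ℝ))
      simpa [Matrix.smul_single] using this
    have e1 : (fun s => ∑ i, ∑ j, Matrix.single i j (f s i j)) = f := by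
      funext s; exact (Matrix.matrix_eq_sum_single (f s)).symm
    have e2 : (∑ i, ∑ j, Matrix.single i j (f' i j)) = f' :=
      (Matrix.matrix_eq_sum_single f').symm
    rwa [e1, e2] at key

/-- Entrywise differentiability of the matrix inverse along a differentiable invertible path. -/
private theorem gddim_hasDerivAt_inv_entrywise {D : ℕ}
    {R : ℝ → Matrix (Fin D) (Fin D) ℝ} {R' : Matrix (Fin D) (Fin D) ℝ} {t : ℝ}
    (hu : IsUnit (R t))
    (h : ∀ i j, HasDerivAt (fun s => R s i j) (R' i j) t) :
    ∀ i j, HasDerivAt (fun s => (R s)⁻¹ i j)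
      ((-((R t)⁻¹ * R' * (R t)⁻¹)) i j) t := by
  rw [← gddim_entrywise_linfty] at h
  rw [← gddim_entrywise_linfty (f := fun s => (R s)⁻¹)]
  have key : HasDerivAt (fun s => Ring.inverse (R s))
      ((-ContinuousLinearMap.mulLeftRight ℝ _ ↑hu.unit⁻¹ ↑hu.unit⁻¹) R') t := by
    have h2 := (hasFDerivAt_ringInverse (𝕜 := ℝ) hu.unit)
    rw [hu.unit_spec] at h2
    exact h2.comp_hasDerivAt t h
  have e : (fun s => (R s)⁻¹) = fun s => Ring.inverse (R s) := by
    funext s; exact Matrix.nonsing_inv_eq_ringInverse _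
  rw [e]
  convert key using 1
  simp [Matrix.coe_units_inv, hu.unit_spec, Matrix.nonsing_inv_eq_ringInverse]

end linfty

attribute [local instance] Matrix.normedAddCommGroup Matrix.normedSpace

private theorem gddim_entrywise_elem {D : ℕ}
    {f : ℝ → Matrix (Fin D) (Fin D) ℝ} {f' : Matrix (Fin D) (Fin D) ℝ} {t : ℝ} :
    HasDerivAt f f' t ↔ ∀ i j, HasDerivAt (fun s => f s i j) (f' i j) t := by
  constructor
  · intro h i j
    exact ((gddim_entryLM i j).toContinuousLinearMap.hasFDerivAt).comp_hasDerivAt t h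
  · intro h
    have key : HasDerivAt (fun s => ∑ i, ∑ j, Matrix.single i j (f s i j))
        (∑ i, ∑ j, Matrix.single i j (f' i j)) t := by
      refine HasDerivAt.fun_sum fun i _ => HasDerivAt.fun_sum fun j _ => ?_
      have := (h i j).smul_const (Matrix.single i j (1 : ℝ))
      simpa [Matrix.smul_single] using this
    have e1 : (fun s => ∑ i, ∑ j, Matrix.single i j (f s i j)) = f := by
      funext s; exact (Matrix.matrix_eq_sum_single (f s)).symm
    have e2 : (∑ i, ∑ j, Matrix.single i j (f' i j)) = f' :=
      (Matrix.matrix_eq_sum_single f').symm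
    rwa [e1, e2] at key

/-- `mulVec` as a continuous bilinear map. -/
private noncomputable def gddim_mulVecCLM (D : ℕ) :
    Matrix (Fin D) (Fin D) ℝ →L[ℝ] (Fin D → ℝ) →L[ℝ] (Fin D → ℝ) :=
  LinearMap.toContinuousLinearMap
    { toFun := fun M => LinearMap.toContinuousLinearMap M.mulVecLin
      map_add' := by
        intro M N; ext v i; simp [Matrix.add_mulVec]
      map_smul' := by
        intro c M; ext v i; simp [Matrix.smul_mulVec] }

@[simp] private theorem gddim_mulVecCLM_apply {D : ℕ} (M : Matrix (Fin D) (Fin D) ℝ)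
    (v : Fin D → ℝ) : gddim_mulVecCLM D M v = M *ᵥ v := rfl

private theorem gddim_hasDerivAt_mulVec {D : ℕ}
    {M : ℝ → Matrix (Fin D) (Fin D) ℝ} {M' : Matrix (Fin D) (Fin D) ℝ}
    {v : ℝ → Fin D → ℝ} {v' : Fin D → ℝ} {t : ℝ}
    (hM : HasDerivAt M M' t) (hv : HasDerivAt v v' t) :
    HasDerivAt (fun s => M s *ᵥ v s) (M' *ᵥ v t + M t *ᵥ v') t := by
  have hc : HasDerivAt (fun s => gddim_mulVecCLM D (M s)) (gddim_mulVecCLM D M') t :=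
    ((gddim_mulVecCLM D).hasFDerivAt).comp_hasDerivAt t hM
  simpa using hc.clm_apply hv

/-- Along any solution of the probability flow ODE with the exact Gaussian
score, `t ↦ R_t⁻¹·(u(t) − Ψ(t)·u₀)` is constant. -/
theorem gddim_eps_constant_along_prob_flow (D : ℕ) (u₀ : Fin D → ℝ)
    (I : Set ℝ) (hI : Convex ℝ I) (h0 : (0 : ℝ) ∈ I)
    (F G S Ψ R : ℝ → Matrix (Fin D) (Fin D) ℝ)
    (hF : ContinuousOn F I) (hG : ContinuousOn G I)
    (hS : ∀ t ∈ I, IsUnit (S t))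
    (hΨ : ∀ t ∈ I, HasDerivAt Ψ (F t * Ψ t) t) (hΨ0 : Ψ 0 = 1)
    (hR : ∀ t ∈ I, HasDerivAt R
      ((F t + (1/2 : ℝ) • (G t * (G t)ᵀ * (S t)⁻¹)) * R t) t)
    (hRinv : ∀ t ∈ I, IsUnit (R t))
    (u : ℝ → Fin D → ℝ)
    (hu : ∀ t ∈ I, HasDerivAt u
      (F t *ᵥ u t + ((1/2 : ℝ) • (G t * (G t)ᵀ * (S t)⁻¹)) *ᵥ (u t - Ψ t *ᵥ u₀)) t) :
    ∀ s ∈ I, ∀ t ∈ I,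
      (R s)⁻¹ *ᵥ (u s - Ψ s *ᵥ u₀) = (R t)⁻¹ *ᵥ (u t - Ψ t *ᵥ u₀) := by
  set A : ℝ → Matrix (Fin D) (Fin D) ℝ :=
    fun r => (1/2 : ℝ) • (G r * (G r)ᵀ * (S r)⁻¹) with hA
  set v : ℝ → Fin D → ℝ := fun r => u r - Ψ r *ᵥ u₀ with hvdef
  -- derivative of v
  have hv : ∀ r ∈ I, HasDerivAt v ((F r + A r) *ᵥ v r) r := by
    intro r hr
    have h1 : HasDerivAt (fun s => Ψ s *ᵥ u₀) ((F r * Ψ r) *ᵥ u₀ + Ψ r *ᵥ (0 : Fin D → ℝ)) r :=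
      gddim_hasDerivAt_mulVec (hΨ r hr) (hasDerivAt_const r u₀)
    have h2 := (hu r hr).sub h1
    refine h2.congr_deriv (Eq.symm ?_)
    rw [Matrix.add_mulVec]
    simp only [hvdef, Matrix.mulVec_zero, add_zero, Matrix.mulVec_sub,
      ← Matrix.mulVec_mulVec]
    abel
  -- derivative of g = R⁻¹ *ᵥ v
  have hg : ∀ r ∈ I, HasDerivAt (fun s => (R s)⁻¹ *ᵥ v s) 0 r := by
    intro r hr
    have hRr := gddim_entrywise_elem.mp (hR r hr)
    have hinv := gddim_hasDerivAt_inv_entrywise (hRinv r hr) hRr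
    have hinv' : HasDerivAt (fun s => (R s)⁻¹)
        (-((R r)⁻¹ * ((F r + A r) * R r) * (R r)⁻¹)) r :=
      gddim_entrywise_elem.mpr hinv
    have hprod := gddim_hasDerivAt_mulVec hinv' (hv r hr)
    convert hprod using 1
    have hRR : R r * (R r)⁻¹ = 1 :=
      Matrix.mul_nonsing_inv _ ((Matrix.isUnit_iff_isUnit_det _).mp (hRinv r hr))
    have hsimp : (R r)⁻¹ * ((F r + A r) * R r) * (R r)⁻¹ = (R r)⁻¹ * (F r + A r) := by
      rw [← Matrix.mul_assoc, Matrix.mul_assoc ((R r)⁻¹ * (F r + A r)), hRR,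
        Matrix.mul_one]
    rw [Matrix.mulVec_mulVec, hsimp, Matrix.neg_mulVec, neg_add_cancel]
  -- conclude constancy by the mean value inequality
  intro s hs t ht
  have key := Convex.norm_image_sub_le_of_norm_hasDerivWithin_le (C := (0 : ℝ))
    (f := fun r => (R r)⁻¹ *ᵥ v r) (f' := fun _ => (0 : Fin D → ℝ))
    (fun x hx => (hg x hx).hasDerivWithinAt) (fun x _ => by simp) hI ht hs
  rw [zero_mul] at key
  have := norm_le_zero_iff.mp key
  have := sub_eq_zero.mp this
  simpa [hvdef] using this
end

section
/- Let D ∈ ℕ, u₀ ∈ ℝ^D, let A_s, A_t, S_s, S_t ∈ ℝ^{D×D} with S_s, S_t, A_s invertible, and set Ψ_{ts} := A_t·A_s⁻¹. Define the Gaussian scores score_t(w) := −S_t⁻¹·(w − A_t·u₀) and score_s(w) := −S_s⁻¹·(w − A_s·u₀). Then for all u, u_s ∈ ℝ^D, score_t(u) = S_t⁻¹·Ψ_{ts}·S_s·score_s(u_s) − S_t⁻¹·(u − Ψ_{ts}·u_s). In particular, one evaluation of the score at any point (u_s, s) determines the score at every point (u, t). -/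
open Matrix

/-!
The covariance turns a Gaussian score back into a displacement from the mean,
`S_s · score_s(u_s) = A_s u₀ - u_s`, and the transition `Ψ_{ts} = A_t A_s⁻¹` carries the mean
at time `s` to the mean at time `t`. So `Ψ_{ts} S_s score_s(u_s) = A_t u₀ - Ψ_{ts} u_s`, and
adding `Ψ_{ts} u_s - u` before applying `S_t⁻¹` gives `score_t(u)`.
-/

namespace Matrix

variable {n R : Type*} [Fintype n] [DecidableEq n] [CommRing R]

noncomputable def gaussianScore (S : Matrix n n R) (m w : n → R) : n → R :=
  -(S⁻¹ *ᵥ (w - m))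

theorem mulVec_gaussianScore {S : Matrix n n R} (hS : IsUnit S) (m w : n → R) :
    S *ᵥ gaussianScore S m w = m - w := by
  rw [gaussianScore, mulVec_neg, mulVec_mulVec, mul_nonsing_inv _ ((isUnit_iff_isUnit_det S).mp hS),
    one_mulVec, neg_sub]

theorem mulVec_mul_nonsing_inv_mulVec {A_s : Matrix n n R} (hA_s : IsUnit A_s)
    (A_t : Matrix n n R) (v : n → R) :
    (A_t * A_s⁻¹) *ᵥ (A_s *ᵥ v) = A_t *ᵥ v := by
  rw [mulVec_mulVec, mul_assoc, nonsing_inv_mul _ ((isUnit_iff_isUnit_det A_s).mp hA_s), mul_one]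

theorem gaussianScore_eq_transport {S_s : Matrix n n R} (hS_s : IsUnit S_s) (S_t Ψ : Matrix n n R)
    {m_s m_t : n → R} (hΨ : Ψ *ᵥ m_s = m_t) (u u_s : n → R) :
    gaussianScore S_t m_t u =
      (S_t⁻¹ * Ψ * S_s) *ᵥ gaussianScore S_s m_s u_s - S_t⁻¹ *ᵥ (u - Ψ *ᵥ u_s) := by
  calc gaussianScore S_t m_t u
      = S_t⁻¹ *ᵥ (m_t - Ψ *ᵥ u_s) - S_t⁻¹ *ᵥ (u - Ψ *ᵥ u_s) := by
        rw [gaussianScore, ← mulVec_sub, ← mulVec_neg]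
        congr 1
        abel
    _ = (S_t⁻¹ * Ψ * S_s) *ᵥ gaussianScore S_s m_s u_s - S_t⁻¹ *ᵥ (u - Ψ *ᵥ u_s) := by
        rw [← mulVec_mulVec, mulVec_gaussianScore hS_s, ← mulVec_mulVec, mulVec_sub Ψ, hΨ]

end Matrix

theorem gaussian_score_recovery_general (D : ℕ) (u₀ : Fin D → ℝ)
    (A_s A_t S_s S_t : Matrix (Fin D) (Fin D) ℝ)
    (hSs : IsUnit S_s) (hAs : IsUnit A_s) :
    ∀ u u_s : Fin D → ℝ,
      -(S_t⁻¹ *ᵥ (u - A_t *ᵥ u₀)) =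
        (S_t⁻¹ * (A_t * A_s⁻¹) * S_s) *ᵥ (-(S_s⁻¹ *ᵥ (u_s - A_s *ᵥ u₀))) -
        S_t⁻¹ *ᵥ (u - (A_t * A_s⁻¹) *ᵥ u_s) :=
  gaussianScore_eq_transport hSs S_t (A_t * A_s⁻¹) (mulVec_mul_nonsing_inv_mulVec hAs A_t u₀)

/-- For Gaussian marginals, one score evaluation at `(u_s, s)` determines
the score at every `(u, t)`. -/
theorem gaussian_score_recovery (D : ℕ) (u₀ : Fin D → ℝ)
    (A_s A_t S_s S_t : Matrix (Fin D) (Fin D) ℝ)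
    (hSs : IsUnit S_s) (hSt : IsUnit S_t) (hAs : IsUnit A_s) :
    ∀ u u_s : Fin D → ℝ,
      -(S_t⁻¹ *ᵥ (u - A_t *ᵥ u₀)) =
        (S_t⁻¹ * (A_t * A_s⁻¹) * S_s) *ᵥ (-(S_s⁻¹ *ᵥ (u_s - A_s *ᵥ u₀))) -
        S_t⁻¹ *ᵥ (u - (A_t * A_s⁻¹) *ᵥ u_s) :=
  gaussian_score_recovery_general D u₀ A_s A_t S_s S_t hSs hAs
end

section
/- Let D ∈ ℕ, and let F, G : ℝ → ℝ^{D×D} and t ↦ Σ_t⁻¹ be continuous on an interval I containing s. Let R : ℝ → ℝ^{D×D} be differentiable on I with R'(t) = (F_t + (1/2) G_t G_tᵀ Σ_t⁻¹)·R_t, R_t invertible, and Σ_t = R_t R_tᵀ for all t ∈ I. Let Ψ, Ψ̂ : ℝ → ℝ^{D×D} be differentiable on I with Ψ'(t) = F_t·Ψ(t), Ψ̂'(t) = (F_t + (1/2) G_t G_tᵀ Σ_t⁻¹)·Ψ̂(t), and Ψ(s) = Ψ̂(s) = I. If N : ℝ → ℝ^{D×D} is differentiable on I with N(s) = 0 and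 N'(t) = F_t·N(t) + (1/2) G_t G_tᵀ R_t⁻ᵀ for all t ∈ I, then N(t) = (Ψ̂(t) − Ψ(t))·R_s for all t ∈ I. Equivalently, ∫_s^t (1/2) Ψ(t,τ) G_τ G_τᵀ R_τ⁻ᵀ dτ = (Ψ̂(t,s) − Ψ(t,s))·R_s, so the stochastic gDDIM update with λ = 0 coincides with the deterministic gDDIM update. -/
open Matrix

attribute [local instance] Matrix.normedAddCommGroup Matrix.normedSpace

open Set in
lemma matrix_mul_norm_bound (D : ℕ) : ∃ C : ℝ, 0 ≤ C ∧
    ∀ A X : Matrix (Fin D) (Fin D) ℝ, ‖A * X‖ ≤ C * ‖A‖ * ‖X‖ := by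
  refine ⟨D, by positivity, fun A X => ?_⟩
  refine (Matrix.norm_le_iff (by positivity)).2 fun i j => ?_
  rw [Matrix.mul_apply]
  calc ‖∑ k, A i k * X k j‖ ≤ ∑ k, ‖A i k * X k j‖ := norm_sum_le _ _
    _ ≤ ∑ _k : Fin D, ‖A‖ * ‖X‖ := Finset.sum_le_sum fun k _ => by
        rw [norm_mul]
        exact mul_le_mul (Matrix.norm_entry_le_entrywise_sup_norm A)
          (Matrix.norm_entry_le_entrywise_sup_norm X) (norm_nonneg _) (norm_nonneg _)
    _ = D * ‖A‖ * ‖X‖ := by simp; ring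

open Set in
lemma affine_matrix_ODE_unique (D : ℕ) (I : Set ℝ) (hI : Convex ℝ I)
    (s : ℝ) (hs : s ∈ I) (A c f g : ℝ → Matrix (Fin D) (Fin D) ℝ)
    (hA : ContinuousOn A I)
    (hf : ∀ t ∈ I, HasDerivAt f (A t * f t + c t) t)
    (hg : ∀ t ∈ I, HasDerivAt g (A t * g t + c t) t)
    (h0 : f s = g s) : ∀ t ∈ I, f t = g t := by
  obtain ⟨C, hC0, hC⟩ := matrix_mul_norm_bound D
  have main : ∀ a b : ℝ, ∀ hab : a ≤ b, Icc a b ⊆ I →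
      (f a = g a → ∀ t ∈ Icc a b, f t = g t) ∧
      (f b = g b → ∀ t ∈ Icc a b, f t = g t) := by
    intro a b hab hsub
    obtain ⟨M, hM⟩ := (isCompact_Icc (a := a) (b := b)).exists_bound_of_continuousOn
      (hA.mono hsub)
    set v : ℝ → Matrix (Fin D) (Fin D) ℝ → Matrix (Fin D) (Fin D) ℝ :=
      fun t x => A (projIcc a b hab t) * x + c (projIcc a b hab t) with hv_def
    have hlip : ∀ t, LipschitzOnWith (Real.toNNReal (C * M))
        (v t) Set.univ := by
      intro t
      intro x _ y _
      have hxy : v t x - v t y = A (projIcc a b hab t) * (x - y) := by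
        simp [hv_def, mul_sub]
      have hM0 : 0 ≤ M := le_trans (norm_nonneg _) (hM a ⟨le_rfl, hab⟩)
      rw [edist_dist, edist_dist, dist_eq_norm, dist_eq_norm,
        show ((Real.toNNReal (C * M) : NNReal) : ENNReal) = ENNReal.ofReal (C * M) from rfl,
        ← ENNReal.ofReal_mul (mul_nonneg hC0 hM0)]
      apply ENNReal.ofReal_le_ofReal
      rw [hxy]
      calc ‖A (projIcc a b hab t) * (x - y)‖
          ≤ C * ‖A (projIcc a b hab t)‖ * ‖x - y‖ := hC _ _
        _ ≤ (C * M) * ‖x - y‖ := by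
            apply mul_le_mul_of_nonneg_right _ (norm_nonneg _)
            exact mul_le_mul_of_nonneg_left (hM _ (projIcc a b hab t).2) hC0
    have hveq : ∀ t ∈ Icc a b, ∀ x, v t x = A t * x + c t := by
      intro t ht x; simp [hv_def, projIcc_of_mem hab ht]
    constructor
    · intro h0'
      refine ODE_solution_unique_of_mem_Icc_right (s := fun _ => Set.univ) (fun t _ => hlip t)
        ?_ ?_ (fun _ _ => trivial) ?_ ?_ (fun _ _ => trivial) h0'
      · exact fun τ hτ => (hf τ (hsub hτ)).continuousAt.continuousWithinAt
      · intro τ hτ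
        rw [hveq τ (Ico_subset_Icc_self hτ)]
        exact (hf τ (hsub (Ico_subset_Icc_self hτ))).hasDerivWithinAt
      · exact fun τ hτ => (hg τ (hsub hτ)).continuousAt.continuousWithinAt
      · intro τ hτ
        rw [hveq τ (Ico_subset_Icc_self hτ)]
        exact (hg τ (hsub (Ico_subset_Icc_self hτ))).hasDerivWithinAt
    · intro h0'
      refine ODE_solution_unique_of_mem_Icc_left (s := fun _ => Set.univ) (fun t _ => hlip t)
        ?_ ?_ (fun _ _ => trivial) ?_ ?_ (fun _ _ => trivial) h0'
      · exact fun τ hτ => (hf τ (hsub hτ)).continuousAt.continuousWithinAt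
      · intro τ hτ
        rw [hveq τ (Ioc_subset_Icc_self hτ)]
        exact (hf τ (hsub (Ioc_subset_Icc_self hτ))).hasDerivWithinAt
      · exact fun τ hτ => (hg τ (hsub hτ)).continuousAt.continuousWithinAt
      · intro τ hτ
        rw [hveq τ (Ioc_subset_Icc_self hτ)]
        exact (hg τ (hsub (Ioc_subset_Icc_self hτ))).hasDerivWithinAt
  intro t ht
  rcases le_total s t with h | h
  · exact (main s t h (hI.ordConnected.out hs ht)).1 h0 t ⟨h, le_rfl⟩
  · exact (main t s h (hI.ordConnected.out ht hs)).2 h0 t ⟨le_rfl, h⟩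


/-- `∫_s^t (1/2)Ψ(t,τ)G GᵀR⁻ᵀ dτ = (Ψ̂(t,s) − Ψ(t,s))·R_s`, stated via
the ODE `N' = F N + (1/2) G Gᵀ R⁻ᵀ`, `N(s) = 0`: then `N = (Ψ̂ − Ψ)·R_s`. Hence the
stochastic gDDIM update with λ = 0 coincides with the deterministic gDDIM update. -/
theorem gddim_lambda_zero_coincidence (D : ℕ)
    (I : Set ℝ) (hI : Convex ℝ I) (s : ℝ) (hs : s ∈ I)
    (F G S R Ψ Ψh N : ℝ → Matrix (Fin D) (Fin D) ℝ)
    (hF : ContinuousOn F I) (hG : ContinuousOn G I)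
    (hSinvcont : ContinuousOn (fun t => (S t)⁻¹) I)
    (hR : ∀ t ∈ I, HasDerivAt R
      ((F t + (1/2 : ℝ) • (G t * (G t)ᵀ * (S t)⁻¹)) * R t) t)
    (hRinv : ∀ t ∈ I, IsUnit (R t))
    (hRS : ∀ t ∈ I, S t = R t * (R t)ᵀ)
    (hΨ : ∀ t ∈ I, HasDerivAt Ψ (F t * Ψ t) t)
    (hΨh : ∀ t ∈ I, HasDerivAt Ψh
      ((F t + (1/2 : ℝ) • (G t * (G t)ᵀ * (S t)⁻¹)) * Ψh t) t)
    (hΨs : Ψ s = 1) (hΨhs : Ψh s = 1)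
    (hNs : N s = 0)
    (hN : ∀ t ∈ I, HasDerivAt N
      (F t * N t + (1/2 : ℝ) • (G t * (G t)ᵀ * ((R t)⁻¹)ᵀ)) t) :
    ∀ t ∈ I, N t = (Ψh t - Ψ t) * R s := by
  set A : ℝ → Matrix (Fin D) (Fin D) ℝ :=
    fun t => (1/2 : ℝ) • (G t * (G t)ᵀ * (S t)⁻¹) with hA_def
  have hGt : ContinuousOn (fun t => (G t)ᵀ) I :=
    (continuous_id.matrix_transpose).comp_continuousOn hG
  have hAcont : ContinuousOn A I := by
    have := ((hG.mul hGt).mul hSinvcont).const_smul (1/2 : ℝ); exact this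
  have hAtotcont : ContinuousOn (fun t => F t + A t) I := hF.add hAcont
  -- right-multiplication by `R s` as a continuous linear map
  set Lr : Matrix (Fin D) (Fin D) ℝ →L[ℝ] Matrix (Fin D) (Fin D) ℝ :=
    LinearMap.toContinuousLinearMap (LinearMap.mulRight ℝ (R s)) with hLr_def
  have hLr : ∀ x, Lr x = x * R s := fun x => rfl
  -- Step 1: R t = Ψh t * R s on I
  have step1 : ∀ t ∈ I, R t = Ψh t * R s := by
    apply affine_matrix_ODE_unique D I hI s hs (fun t => F t + A t) (fun _ => 0)
      R (fun t => Ψh t * R s) hAtotcont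
    · intro t ht
      have h := hR t ht
      show HasDerivAt R ((F t + A t) * R t + 0) t
      rw [add_zero]; exact h
    · intro t ht
      have h1 : HasDerivAt (fun t => Lr (Ψh t)) (Lr ((F t + A t) * Ψh t)) t :=
        Lr.hasFDerivAt.comp_hasDerivAt t (hΨh t ht)
      simp only [hLr] at h1
      convert h1 using 1
      rw [Matrix.mul_assoc, add_zero]
    · rw [hΨhs, one_mul]
  -- key algebraic identity: A t * R t = (1/2) • (G Gᵀ (R⁻¹)ᵀ)
  have hAR : ∀ t ∈ I, A t * R t = (1/2 : ℝ) • (G t * (G t)ᵀ * ((R t)⁻¹)ᵀ) := by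
    intro t ht
    have hdet : IsUnit (R t).det := (Matrix.isUnit_iff_isUnit_det _).mp (hRinv t ht)
    have hSR : (S t)⁻¹ * R t = ((R t)ᵀ)⁻¹ := by
      rw [hRS t ht, Matrix.mul_inv_rev, Matrix.mul_assoc,
        Matrix.nonsing_inv_mul _ hdet, Matrix.mul_one]
    rw [hA_def, smul_mul_assoc, Matrix.mul_assoc, hSR, Matrix.transpose_nonsing_inv]
  -- Step 2: uniqueness for N' = F N + c
  apply affine_matrix_ODE_unique D I hI s hs F
    (fun t => (1/2 : ℝ) • (G t * (G t)ᵀ * ((R t)⁻¹)ᵀ)) N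
    (fun t => (Ψh t - Ψ t) * R s) hF hN
  · intro t ht
    have hsub : HasDerivAt (fun t => Ψh t - Ψ t)
        ((F t + A t) * Ψh t - F t * Ψ t) t := (hΨh t ht).sub (hΨ t ht)
    have h1 : HasDerivAt (fun t => Lr (Ψh t - Ψ t))
        (Lr ((F t + A t) * Ψh t - F t * Ψ t)) t :=
      Lr.hasFDerivAt.comp_hasDerivAt t hsub
    simp only [hLr] at h1
    convert h1 using 1
    rw [← hAR t ht, step1 t ht]
    simp only [Matrix.sub_mul, Matrix.add_mul, Matrix.mul_sub, Matrix.mul_assoc]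
    abel
  · rw [hNs, hΨhs, hΨs, sub_self, Matrix.zero_mul]
end
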